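/- Let W be a thin irreducible T-module with endpoint 1 and local eigenvalue η = −1, and let v be a nonzero vector in E_1*W. Then E_i*A_{i+1}v = 0 for 1 ≤ i ≤ D−1; in particular A_Dv ∈ E_D*V. -/

import Mathlib

open Matrix Polynomial BigOperators

noncomputable section

variable {X : Type*} [Fintype X] [DecidableEq X]

/-- The `i`-th distance matrix of the graph `G` (indexed by `ℤ`; by convention it is
the zero matrix for `i < 0` and also for `i` larger than the diameter). -/
def distMat (G : SimpleGraph X) (i : ℤ) : Matrix X X ℂ :=
  Matrix.of fun y z => if (G.dist y z : ℤ) = i then (1 : ℂ) else 0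

/-- The all-ones matrix `J`. -/
def allOnes (X : Type*) : Matrix X X ℂ := Matrix.of fun _ _ => (1 : ℂ)

/-- The `i`-th dual idempotent `Eᵢ*` with respect to the base point `x`
(indexed by `ℤ`; zero for `i < 0` and for `i` larger than the diameter). -/
def dualIdem (G : SimpleGraph X) (x : X) (i : ℤ) : Matrix X X ℂ :=
  Matrix.of fun y z => if y = z ∧ (G.dist x y : ℤ) = i then (1 : ℂ) else 0

/-- The characteristic vector `sᵢ` of the `i`-th sphere around `x`. -/
def sphereVec (G : SimpleGraph X) (x : X) (i : ℤ) : X → ℂ :=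
  fun y => if (G.dist x y : ℤ) = i then (1 : ℂ) else 0

/-- `G` is distance-regular with diameter `D` and intersection numbers `p h i j`:
`G` is connected with diameter `D`, and for all `h,i,j ≤ D` and all vertices `y,z`
at distance `h`, the number of vertices `w` with `dist y w = i` and `dist w z = j`
equals `p h i j`. -/
def IsDRG (G : SimpleGraph X) (D : ℕ) (p : ℕ → ℕ → ℕ → ℕ) : Prop :=
  G.Connected ∧ (∀ y z : X, G.dist y z ≤ D) ∧ (∃ y z : X, G.dist y z = D) ∧
    ∀ h i j : ℕ, h ≤ D → i ≤ D → j ≤ D → ∀ y z : X, G.dist y z = h →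
      (Finset.univ.filter fun w => G.dist y w = i ∧ G.dist w z = j).card = p h i j

/-- The Bose–Mesner algebra `M`, the subalgebra of `Mat_X(ℂ)` generated by the
adjacency matrix. -/
def bmAlg (G : SimpleGraph X) : Subalgebra ℂ (Matrix X X ℂ) :=
  Algebra.adjoin ℂ {distMat G 1}

/-- The Terwilliger algebra `T`, generated by `A, E₀*, …, E_D*`. -/
def twAlg (G : SimpleGraph X) (x : X) (D : ℕ) : Subalgebra ℂ (Matrix X X ℂ) :=
  Algebra.adjoin ℂ ({distMat G 1} ∪ {B | ∃ i : ℕ, i ≤ D ∧ B = dualIdem G x (i : ℤ)})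

/-- `W` is a `T`-module. -/
def IsTMod (G : SimpleGraph X) (x : X) (D : ℕ) (W : Submodule ℂ (X → ℂ)) : Prop :=
  ∀ B ∈ twAlg G x D, ∀ w ∈ W, B.mulVec w ∈ W

/-- `W` is an irreducible `T`-module. -/
def IsIrredTMod (G : SimpleGraph X) (x : X) (D : ℕ) (W : Submodule ℂ (X → ℂ)) : Prop :=
  IsTMod G x D W ∧ W ≠ ⊥ ∧
    ∀ U : Submodule ℂ (X → ℂ), U ≤ W → IsTMod G x D U → U = ⊥ ∨ U = W

/-- `W` is thin: `dim Eᵢ* W ≤ 1` for `0 ≤ i ≤ D`. -/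
def IsThin (G : SimpleGraph X) (x : X) (D : ℕ) (W : Submodule ℂ (X → ℂ)) : Prop :=
  ∀ i : ℕ, i ≤ D → Module.finrank ℂ (W.map (dualIdem G x (i : ℤ)).mulVecLin) ≤ 1

/-- `W` has endpoint `1`, i.e. `E₀* W = 0` and `E₁* W ≠ 0`. -/
def HasEndpointOne (G : SimpleGraph X) (x : X) (W : Submodule ℂ (X → ℂ)) : Prop :=
  W.map (dualIdem G x 0).mulVecLin = ⊥ ∧ W.map (dualIdem G x 1).mulVecLin ≠ ⊥

/-- The linear map `P ↦ P v` on matrices. -/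
def actOn (v : X → ℂ) : Matrix X X ℂ →ₗ[ℂ] (X → ℂ) where
  toFun P := P.mulVec v
  map_add' P Q := Matrix.add_mulVec P Q v
  map_smul' c P := by simp [Matrix.smul_mulVec]

/-- The subspace `(M; v) = {P ∈ M : P v ∈ E_D* V}`. -/
def MsubV (G : SimpleGraph X) (x : X) (D : ℕ) (v : X → ℂ) : Submodule ℂ (Matrix X X ℂ) :=
  (bmAlg G).toSubmodule ⊓
    Submodule.comap (actOn v) (LinearMap.range (dualIdem G x (D : ℤ)).mulVecLin)

/-- The space `M(θ) = {Y ∈ M : (A - θI) Y ∈ ℂ A_D}` for `θ ∈ ℂ`. -/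
def pseudoSpace (G : SimpleGraph X) (D : ℕ) (θ : ℂ) : Submodule ℂ (Matrix X X ℂ) :=
  (bmAlg G).toSubmodule ⊓
    Submodule.comap (LinearMap.mulLeft ℂ (distMat G 1 - θ • 1))
      (Submodule.span ℂ {distMat G (D : ℤ)})

/-!
Write `u_t = A_t v`. Since `v` lives on the first subconstituent `Γ(x)`, the triangle inequality
gives `E_s* u_t = 0` whenever `|s - t| ≥ 2`; moreover `∑ v = 0` because `E₀*W = 0`, and
`E₁* A v = -v`. Seen from `y ∈ Γ(x)`, the vertices of `Γ(x)` lie at distance `0`, `1` or `2`, so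
`E₁*(u_0 + u_1 + u_2) = E₁* J v = 0`, i.e. `E₁* u_2 = 0`.

Inductively suppose `E_m* u_{m+1} = 0` and put `w = E_{m+1}* u_{m+2} ∈ E_{m+1}*W`. Expanding
`A A_{m+2}` in the distance matrices, only `A_{m+1}` contributes to `E_m* A u_{m+2} = E_m* A w`,
so `E_m* A w = 0`. If `w ≠ 0`, it spans the one-dimensional space `E_{m+1}*W`, so `E_m* A` kills
`E_{m+1}*W` and the vectors of `W` vanishing on the ball of radius `m` about `x` form a
`T`-submodule. It contains `w` but not `v`, contradicting irreducibility. Finally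
`E_s* A_D v = 0` for every `s < D`, so `A_D v ∈ E_D*V`.
-/

section DualIdempotents

variable (G : SimpleGraph X) (x : X)

omit [Fintype X] in
theorem dualIdem_eq_diagonal (i : ℤ) :
    dualIdem G x i = diagonal fun y => if (G.dist x y : ℤ) = i then 1 else 0 := by
  ext y z
  by_cases h : y = z <;> simp [dualIdem, h]

theorem dualIdem_mulVec_apply (i : ℤ) (w : X → ℂ) (y : X) :
    (dualIdem G x i *ᵥ w) y = if (G.dist x y : ℤ) = i then w y else 0 := by
  rw [dualIdem_eq_diagonal, mulVec_diagonal, ite_mul, one_mul, zero_mul]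

theorem dualIdem_mulVec_dualIdem_mulVec (i j : ℤ) (w : X → ℂ) :
    dualIdem G x i *ᵥ (dualIdem G x j *ᵥ w) = if i = j then dualIdem G x i *ᵥ w else 0 := by
  ext y
  simp only [dualIdem_mulVec_apply, apply_ite (fun u : X → ℂ => u y), Pi.zero_apply]
  split_ifs <;> simp_all

variable {G x} {D : ℕ}

theorem sum_dualIdem_mulVec (hx : ∀ y, G.dist x y ≤ D) (w : X → ℂ) :
    ∑ r ∈ Finset.range (D + 1), dualIdem G x r *ᵥ w = w := by
  ext y
  simp only [Finset.sum_apply, dualIdem_mulVec_apply, Nat.cast_inj]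
  rw [Finset.sum_ite_eq]
  simp [Nat.lt_succ_iff.2 (hx y)]

theorem mulVec_eq_sum_dualIdem (hx : ∀ y, G.dist x y ≤ D) (M : Matrix X X ℂ) (w : X → ℂ) :
    M *ᵥ w = ∑ r ∈ Finset.range (D + 1), M *ᵥ (dualIdem G x r *ᵥ w) := by
  rw [← mulVec_sum, sum_dualIdem_mulVec hx]

omit [DecidableEq X] in
theorem distMat_mulVec_apply (t : ℤ) (w : X → ℂ) (y : X) :
    (distMat G t *ᵥ w) y = ∑ z, if (G.dist y z : ℤ) = t then w z else 0 := by
  simp only [mulVec, dotProduct, distMat, of_apply, ite_mul, one_mul, zero_mul]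

theorem dualIdem_mulVec_distMat_mulVec_dualIdem_mulVec_eq_zero (hc : G.Connected) {s t r : ℕ}
    (h : s + t < r ∨ t + r < s ∨ r + s < t) (w : X → ℂ) :
    dualIdem G x s *ᵥ (distMat G t *ᵥ (dualIdem G x r *ᵥ w)) = 0 := by
  ext y
  rw [dualIdem_mulVec_apply, distMat_mulVec_apply, Pi.zero_apply]
  refine ite_eq_right_iff.2 fun hy => Finset.sum_eq_zero fun z _ => ?_
  rw [dualIdem_mulVec_apply]
  split_ifs with hyz hz <;> try rfl
  have := hc.dist_triangle (u := x) (v := y) (w := z)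
  have := hc.dist_triangle (u := x) (v := z) (w := y)
  have := hc.dist_triangle (u := y) (v := x) (w := z)
  rw [SimpleGraph.dist_comm (u := z) (v := y)] at *
  rw [SimpleGraph.dist_comm (u := y) (v := x)] at *
  omega

omit [Fintype X] in
theorem distMat_zero (hc : G.Connected) : distMat G 0 = 1 := by
  ext y z
  simp only [distMat, of_apply, one_apply, Nat.cast_eq_zero, hc.dist_eq_zero_iff]

end DualIdempotents

theorem SimpleGraph.Connected.exists_dist_eq_and_dist_eq {V : Type*} {G : SimpleGraph V}
    (hc : G.Connected) {y z : V} {h : ℕ} (hh : h ≤ G.dist y z) :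
    ∃ w, G.dist y w = h ∧ G.dist w z = G.dist y z - h := by
  obtain ⟨q, hq⟩ := hc.exists_walk_length_eq_dist y z
  have hy := SimpleGraph.dist_le (q.take h)
  have hz := SimpleGraph.dist_le (q.drop h)
  have := hc.dist_triangle (u := y) (v := q.getVert h) (w := z)
  simp only [SimpleGraph.Walk.take_length, SimpleGraph.Walk.drop_length, hq] at hy hz
  exact ⟨q.getVert h, by omega, by omega⟩

namespace IsDRG

variable {G : SimpleGraph X} {D : ℕ} {p : ℕ → ℕ → ℕ → ℕ}

section

omit [DecidableEq X]

theorem exists_dist_eq (hG : IsDRG G D p) {h : ℕ} (hh : h ≤ D) : ∃ y z, G.dist y z = h := by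
  obtain ⟨y, z, hyz⟩ := hG.2.2.1
  obtain ⟨w, hw, -⟩ := hG.1.exists_dist_eq_and_dist_eq (hyz ▸ hh)
  exact ⟨y, w, hw⟩

theorem p_one_eq_zero (hG : IsDRG G D p) {h j : ℕ} (hh : h ≤ D) (hj : j ≤ D)
    (hfar : h + 1 < j ∨ j + 1 < h) : p h 1 j = 0 := by
  obtain ⟨y, z, hyz⟩ := hG.exists_dist_eq hh
  rw [← hG.2.2.2 h 1 j hh (by omega) hj y z hyz, Finset.card_eq_zero,
    Finset.filter_eq_empty_iff]
  rintro w - ⟨hyw, hwz⟩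
  have := hG.1.dist_triangle (u := y) (v := w) (w := z)
  have := hG.1.dist_triangle (u := w) (v := y) (w := z)
  rw [SimpleGraph.dist_comm (u := w) (v := y)] at this
  omega

theorem p_succ_one_pos (hG : IsDRG G D p) {t : ℕ} (ht : t + 1 ≤ D) : 0 < p (t + 1) 1 t := by
  obtain ⟨y, z, hyz⟩ := hG.exists_dist_eq ht
  rw [← hG.2.2.2 (t + 1) 1 t ht (by omega) (by omega) y z hyz, Finset.card_pos]
  obtain ⟨w, hyw, hwz⟩ := hG.1.exists_dist_eq_and_dist_eq (y := y) (z := z) (h := 1) (by omega)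
  exact ⟨w, by simp [hyw, hwz, hyz]⟩

theorem distMat_one_mul_distMat (hG : IsDRG G D p) (hD : 1 ≤ D) {t : ℕ} (ht : t ≤ D) :
    distMat G 1 * distMat G t = ∑ h ∈ Finset.range (D + 1), (p h 1 t : ℂ) • distMat G h := by
  ext y z
  have hcount : ∑ w, distMat G 1 y w * distMat G t w z
      = ((Finset.univ.filter fun w => G.dist y w = 1 ∧ G.dist w z = t).card : ℂ) := by
    rw [Finset.card_filter, Nat.cast_sum]
    refine Finset.sum_congr rfl fun w _ => ?_
    by_cases h1 : G.dist y w = 1 <;> by_cases h2 : G.dist w z = t <;>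
      simp [distMat, h1, h2]
  rw [mul_apply, hcount, hG.2.2.2 _ 1 t (hG.2.1 y z) hD ht y z rfl, Matrix.sum_apply,
    Finset.sum_eq_single (G.dist y z)]
  · simp [distMat]
  · intro h _ hne
    simp [distMat, Ne.symm hne]
  · simp [Nat.lt_succ_iff.2 (hG.2.1 y z)]

end

theorem distMat_mem_bmAlg (hG : IsDRG G D p) (hD : 1 ≤ D) {t : ℕ} (ht : t ≤ D) :
    distMat G t ∈ bmAlg G := by
  induction t using Nat.strong_induction_on with
  | _ t ih =>
  rcases t with _ | t
  · simp [distMat_zero hG.1, (bmAlg G).one_mem]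
  have hrec : (p (t + 1) 1 t : ℂ) • distMat G (t + 1 : ℕ)
      = distMat G 1 * distMat G t
        - ∑ h ∈ Finset.range (t + 1), (p h 1 t : ℂ) • distMat G h := by
    rw [hG.distMat_one_mul_distMat hD (by omega),
      ← Finset.sum_subset (Finset.range_subset_range.2 (by omega : t + 2 ≤ D + 1)),
      Finset.sum_range_succ, add_sub_cancel_left]
    intro h hD' ht'
    simp only [Finset.mem_range] at hD' ht'
    simp [hG.p_one_eq_zero (by omega) (by omega) (by omega : h + 1 < t ∨ t + 1 < h)]
  have hmem : (p (t + 1) 1 t : ℂ) • distMat G (t + 1 : ℕ) ∈ bmAlg G := by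
    rw [hrec]
    refine sub_mem (mul_mem (Algebra.subset_adjoin rfl) (ih t (by omega) (by omega)))
      (sum_mem fun h hh => Subalgebra.smul_mem _ (ih h (by simpa using hh) ?_) _)
    simp only [Finset.mem_range] at hh
    omega
  simpa [(hG.p_succ_one_pos ht).ne'] using Subalgebra.smul_mem _ hmem (p (t + 1) 1 t : ℂ)⁻¹

end IsDRG

section TModules

variable {G : SimpleGraph X} {x : X} {D : ℕ} {W : Submodule ℂ (X → ℂ)}

theorem IsTMod.distMat_one_mulVec_mem (hW : IsTMod G x D W) {w : X → ℂ} (hw : w ∈ W) :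
    distMat G 1 *ᵥ w ∈ W :=
  hW _ (Algebra.subset_adjoin (Or.inl rfl)) w hw

theorem IsTMod.dualIdem_mulVec_mem (hW : IsTMod G x D W) {i : ℕ} (hi : i ≤ D) {w : X → ℂ}
    (hw : w ∈ W) : dualIdem G x i *ᵥ w ∈ W :=
  hW _ (Algebra.subset_adjoin (Or.inr ⟨i, hi, rfl⟩)) w hw

theorem IsTMod.mulVec_mem_of_mem_bmAlg (hW : IsTMod G x D W) {B : Matrix X X ℂ}
    (hB : B ∈ bmAlg G) {w : X → ℂ} (hw : w ∈ W) : B *ᵥ w ∈ W :=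
  hW B (Algebra.adjoin_mono Set.subset_union_left hB) w hw

theorem isTMod_of_forall_mulVec_mem {U : Submodule ℂ (X → ℂ)}
    (hA : ∀ w ∈ U, distMat G 1 *ᵥ w ∈ U)
    (hE : ∀ i ≤ D, ∀ w ∈ U, dualIdem G x i *ᵥ w ∈ U) : IsTMod G x D U := by
  intro B hB
  induction hB using Algebra.adjoin_induction with
  | mem B hB =>
    rcases hB with rfl | ⟨i, hi, rfl⟩
    exacts [hA, hE i hi]
  | algebraMap c =>
    intro w hw
    simpa [Algebra.algebraMap_eq_smul_one, smul_mulVec] using U.smul_mem c hw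
  | add B C _ _ hB hC =>
    intro w hw
    rw [add_mulVec]
    exact U.add_mem (hB w hw) (hC w hw)
  | mul B C _ _ hB hC =>
    intro w hw
    rw [← mulVec_mulVec]
    exact hB _ (hC w hw)

variable (G x) in
def vanishingOnBall (m : ℕ) (W : Submodule ℂ (X → ℂ)) : Submodule ℂ (X → ℂ) :=
  W ⊓ ⨅ (s : ℕ) (_ : s ≤ m), LinearMap.ker (dualIdem G x s).mulVecLin

theorem mem_vanishingOnBall {m : ℕ} {w : X → ℂ} :
    w ∈ vanishingOnBall G x m W ↔ w ∈ W ∧ ∀ s ≤ m, dualIdem G x s *ᵥ w = 0 := by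
  simp [vanishingOnBall]

theorem IsTMod.isTMod_vanishingOnBall (hW : IsTMod G x D W) (hc : G.Connected)
    (hx : ∀ y, G.dist x y ≤ D) {m : ℕ}
    (hAm : ∀ w ∈ W, dualIdem G x m *ᵥ (distMat G 1 *ᵥ (dualIdem G x (m + 1 : ℕ) *ᵥ w)) = 0) :
    IsTMod G x D (vanishingOnBall G x m W) := by
  refine isTMod_of_forall_mulVec_mem (fun w hw => ?_) (fun i hi w hw => ?_) <;>
    rw [mem_vanishingOnBall] at hw ⊢
  · refine ⟨hW.distMat_one_mulVec_mem hw.1, fun s hs => ?_⟩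
    rw [mulVec_eq_sum_dualIdem hx (distMat G 1) w, mulVec_sum]
    refine Finset.sum_eq_zero fun r _ => ?_
    obtain hr | rfl | hr : r ≤ m ∨ r = m + 1 ∨ m + 1 < r := by omega
    · rw [hw.2 r hr, mulVec_zero, mulVec_zero]
    · obtain rfl | hs : s = m ∨ s + 1 < m + 1 := by omega
      · exact hAm w hw.1
      · simpa using dualIdem_mulVec_distMat_mulVec_dualIdem_mulVec_eq_zero (t := 1) hc
          (Or.inl hs) w
    · simpa using dualIdem_mulVec_distMat_mulVec_dualIdem_mulVec_eq_zero (t := 1) hc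
        (Or.inl (by omega : s + 1 < r)) w
  · refine ⟨hW.dualIdem_mulVec_mem hi hw.1, fun s hs => ?_⟩
    rw [dualIdem_mulVec_dualIdem_mulVec]
    split_ifs with hsi
    · exact hw.2 s hs
    · rfl

theorem IsIrredTMod.eq_zero_of_dualIdem_mulVec_distMat_one_mulVec_eq_zero
    (hirr : IsIrredTMod G x D W) (hthin : IsThin G x D W) (hc : G.Connected)
    (hx : ∀ y, G.dist x y ≤ D) {m : ℕ} (hm : m + 1 ≤ D) {w : X → ℂ}
    (hw : w ∈ W.map (dualIdem G x (m + 1 : ℕ)).mulVecLin)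
    (hAw : dualIdem G x m *ᵥ (distMat G 1 *ᵥ w) = 0)
    {v : X → ℂ} (hv : v ∈ W) {r : ℕ} (hr : r ≤ m) (hvr : dualIdem G x r *ᵥ v ≠ 0) : w = 0 := by
  by_contra hw0
  have hspan : W.map (dualIdem G x (m + 1 : ℕ)).mulVecLin = ℂ ∙ w :=
    eq_span_singleton_of_mem_of_finrank_eq_one
      (le_antisymm (hthin _ hm) (Submodule.one_le_finrank_iff.2 fun h =>
        hw0 ((Submodule.mem_bot ℂ).1 (h ▸ hw)))) hw hw0
  have hAW : ∀ w' ∈ W,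
      dualIdem G x m *ᵥ (distMat G 1 *ᵥ (dualIdem G x (m + 1 : ℕ) *ᵥ w')) = 0 := by
    intro w' hw'
    obtain ⟨c, hc⟩ := Submodule.mem_span_singleton.1 (hspan ▸ Submodule.mem_map_of_mem hw')
    rw [show dualIdem G x (m + 1 : ℕ) *ᵥ w' = c • w from hc.symm, mulVec_smul, mulVec_smul, hAw,
      smul_zero]
  obtain ⟨w₀, hw₀, rfl⟩ := hw
  rcases hirr.2.2 _ inf_le_left (hirr.1.isTMod_vanishingOnBall hc hx hAW) with hbot | htop
  · refine hw0 ((Submodule.mem_bot ℂ).1 (hbot ▸ mem_vanishingOnBall.2 ⟨?_, fun s hs => ?_⟩))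
    · exact hirr.1.dualIdem_mulVec_mem hm hw₀
    · rw [mulVecLin_apply, dualIdem_mulVec_dualIdem_mulVec, if_neg (by omega)]
  · exact hvr ((mem_vanishingOnBall.1 (htop ▸ hv)).2 r hr)

end TModules

section FirstSubconstituent

variable {G : SimpleGraph X} {x : X} {v : X → ℂ}

theorem dualIdem_mulVec_distMat_mulVec_eq_zero_of_far (hc : G.Connected)
    (hv1 : dualIdem G x 1 *ᵥ v = v) {s t : ℕ} (hst : s + 1 < t ∨ t + 1 < s) :
    dualIdem G x s *ᵥ (distMat G t *ᵥ v) = 0 := by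
  rw [← hv1]
  simpa using dualIdem_mulVec_distMat_mulVec_dualIdem_mulVec_eq_zero (r := 1) hc (by omega) v

theorem dualIdem_mulVec_distMat_mulVec_eq_self {D : ℕ} (hc : G.Connected)
    (hx : ∀ y, G.dist x y ≤ D) (hv1 : dualIdem G x 1 *ᵥ v = v)
    (hbelow : dualIdem G x (D - 1 : ℕ) *ᵥ (distMat G D *ᵥ v) = 0) :
    dualIdem G x D *ᵥ (distMat G D *ᵥ v) = distMat G D *ᵥ v := by
  conv_rhs => rw [← sum_dualIdem_mulVec hx (distMat G D *ᵥ v)]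
  rw [Finset.sum_eq_single D]
  · intro s hsD hs
    rw [Finset.mem_range] at hsD
    obtain rfl | hs : s = D - 1 ∨ s + 1 < D := by omega
    · exact hbelow
    · exact dualIdem_mulVec_distMat_mulVec_eq_zero_of_far hc hv1 (Or.inl hs)
  · simp

theorem sum_eq_zero_of_dualIdem_zero_mulVec_distMat_one_mulVec (hv1 : dualIdem G x 1 *ᵥ v = v)
    (h0 : dualIdem G x 0 *ᵥ (distMat G 1 *ᵥ v) = 0) : ∑ z, v z = 0 := by
  have h := congrFun h0 x
  rw [← hv1]
  simpa [dualIdem_mulVec_apply, distMat_mulVec_apply] using h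

theorem dualIdem_one_mulVec_distMat_two_mulVec_eq_zero (hc : G.Connected)
    (hv1 : dualIdem G x 1 *ᵥ v = v) (hsum : ∑ z, v z = 0)
    (hloc : dualIdem G x 1 *ᵥ (distMat G 1 *ᵥ v) = -v) :
    dualIdem G x 1 *ᵥ (distMat G 2 *ᵥ v) = 0 := by
  ext y
  rw [dualIdem_mulVec_apply, Pi.zero_apply]
  refine ite_eq_right_iff.2 fun hy => ?_
  have hAv : (distMat G 1 *ᵥ v) y = -v y := by
    simpa [dualIdem_mulVec_apply, hy] using congrFun hloc y
  -- a vertex of the support of `v` lies at distance at most `2` from `y`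
  calc (distMat G 2 *ᵥ v) y
      = ∑ z, (v z - (if y = z then v z else 0) - if (G.dist y z : ℤ) = 1 then v z else 0) := by
        rw [distMat_mulVec_apply]
        refine Finset.sum_congr rfl fun z _ => ?_
        have hz := congrFun hv1 z
        rw [dualIdem_mulVec_apply] at hz
        have htri : G.dist y z ≤ G.dist x y + G.dist x z :=
          G.dist_comm (u := x) ▸ hc.dist_triangle
        by_cases hyz : y = z
        · simp [hyz]
        have := hc.pos_dist_of_ne hyz
        rcases eq_or_ne (G.dist x z) 1 with hxz | hxz
        · obtain h | h : G.dist y z = 1 ∨ G.dist y z = 2 := by omega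
          all_goals simp [h, hyz]
        · have : v z = 0 := by simpa [hxz] using hz.symm
          simp [this]
    _ = ∑ z, v z - v y - (distMat G 1 *ᵥ v) y := by
        rw [Finset.sum_sub_distrib, Finset.sum_sub_distrib, Finset.sum_ite_eq,
          distMat_mulVec_apply]
        simp
    _ = 0 := by rw [hsum, hAv]; ring

end FirstSubconstituent

section Main

variable {G : SimpleGraph X} {D : ℕ} {p : ℕ → ℕ → ℕ → ℕ} {x : X} {v : X → ℂ}

theorem IsDRG.dualIdem_mulVec_distMat_one_mulVec_dualIdem_succ_mulVec_eq_zero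
    (hG : IsDRG G D p) (hv1 : dualIdem G x 1 *ᵥ v = v) {m : ℕ} (hm : m + 2 ≤ D)
    (hprev : dualIdem G x m *ᵥ (distMat G (m + 1 : ℕ) *ᵥ v) = 0) :
    dualIdem G x m *ᵥ
      (distMat G 1 *ᵥ (dualIdem G x (m + 1 : ℕ) *ᵥ (distMat G (m + 2 : ℕ) *ᵥ v))) = 0 := by
  have hc := hG.1
  -- `E_r* A_{m+2} v = 0` for `r ≤ m`, and `E_m* A E_r* = 0` for `r ≥ m + 2`
  have hlower : dualIdem G x m *ᵥ (distMat G 1 *ᵥ (distMat G (m + 2 : ℕ) *ᵥ v))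
      = dualIdem G x m *ᵥ
          (distMat G 1 *ᵥ (dualIdem G x (m + 1 : ℕ) *ᵥ (distMat G (m + 2 : ℕ) *ᵥ v))) := by
    rw [mulVec_eq_sum_dualIdem (hG.2.1 x) (distMat G 1), mulVec_sum,
      Finset.sum_eq_single (m + 1)]
    · intro r _ hr
      obtain hr | hr : r ≤ m ∨ m + 1 < r := by omega
      · rw [dualIdem_mulVec_distMat_mulVec_eq_zero_of_far hc hv1 (by omega), mulVec_zero,
          mulVec_zero]
      · simpa only [Nat.cast_one] using
          dualIdem_mulVec_distMat_mulVec_dualIdem_mulVec_eq_zero (t := 1) hc (Or.inl hr)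
            (distMat G (m + 2 : ℕ) *ᵥ v)
    · simp only [Finset.mem_range]
      omega
  rw [← hlower, mulVec_mulVec _ (distMat G 1), hG.distMat_one_mul_distMat (by omega) hm,
    sum_mulVec, mulVec_sum]
  refine Finset.sum_eq_zero fun h hh => ?_
  rw [smul_mulVec, mulVec_smul]
  obtain hh' | rfl | hh' : h ≤ m ∨ h = m + 1 ∨ m + 1 < h := by omega
  · rw [hG.p_one_eq_zero (by simpa [Nat.lt_succ_iff] using hh) hm (by omega), Nat.cast_zero,
      zero_smul]
  · rw [hprev, smul_zero]
  · rw [dualIdem_mulVec_distMat_mulVec_eq_zero_of_far hc hv1 (Or.inl hh'), smul_zero]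

theorem IsIrredTMod.dualIdem_mulVec_distMat_succ_mulVec_eq_zero {W : Submodule ℂ (X → ℂ)}
    (hirr : IsIrredTMod G x D W) (hthin : IsThin G x D W) (hG : IsDRG G D p)
    (hvW : v ∈ W) (hv : v ≠ 0) (hv1 : dualIdem G x 1 *ᵥ v = v) (hsum : ∑ z, v z = 0)
    (hloc : dualIdem G x 1 *ᵥ (distMat G 1 *ᵥ v) = -v) {i : ℕ} (hi : 1 ≤ i) (hiD : i + 1 ≤ D) :
    dualIdem G x i *ᵥ (distMat G (i + 1 : ℕ) *ᵥ v) = 0 := by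
  induction i, hi using Nat.le_induction with
  | base => simpa using dualIdem_one_mulVec_distMat_two_mulVec_eq_zero hG.1 hv1 hsum hloc
  | succ m hm ih =>
    have hAv : distMat G (m + 2 : ℕ) *ᵥ v ∈ W :=
      hirr.1.mulVec_mem_of_mem_bmAlg (hG.distMat_mem_bmAlg (by omega) hiD) hvW
    exact hirr.eq_zero_of_dualIdem_mulVec_distMat_one_mulVec_eq_zero hthin hG.1 (hG.2.1 x)
      (by omega) (Submodule.mem_map_of_mem hAv)
      (hG.dualIdem_mulVec_distMat_one_mulVec_dualIdem_succ_mulVec_eq_zero hv1 hiD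
        (ih (by omega)))
      hvW hm (by simpa [hv1] using hv)

end Main

/-- Let `W` be a thin irreducible `T`-module with endpoint 1 and local
eigenvalue `η = -1`, and let `v` be a nonzero vector in `E₁* W`.  Then
`Eᵢ* A_{i+1} v = 0` for `1 ≤ i ≤ D-1`; in particular `A_D v ∈ E_D* V`. -/
theorem stmt16 (G : SimpleGraph X) (D : ℕ) (p : ℕ → ℕ → ℕ → ℕ)
    (hdrg : IsDRG G D p) (hD : 3 ≤ D) (x : X)
    (W : Submodule ℂ (X → ℂ))
    (hirr : IsIrredTMod G x D W) (hthin : IsThin G x D W)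
    (hend : HasEndpointOne G x W)
    (hloc : ∀ w ∈ W.map (dualIdem G x 1).mulVecLin,
      (dualIdem G x 1 * distMat G 1 * dualIdem G x 1).mulVec w = (-1 : ℂ) • w)
    (v : X → ℂ) (hv : v ≠ 0) (hvW : v ∈ W.map (dualIdem G x 1).mulVecLin) :
    (∀ i : ℕ, 1 ≤ i → i ≤ D - 1 →
        (dualIdem G x (i : ℤ)).mulVec ((distMat G ((i : ℤ) + 1)).mulVec v) = 0) ∧
      (distMat G (D : ℤ)).mulVec v ∈ LinearMap.range (dualIdem G x (D : ℤ)).mulVecLin := by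
  obtain ⟨w₀, hw₀, hvw₀⟩ := hvW
  have hv1 : dualIdem G x 1 *ᵥ v = v := by
    rw [← hvw₀, mulVecLin_apply, dualIdem_mulVec_dualIdem_mulVec, if_pos rfl]
  have hvW' : v ∈ W := by
    rw [← hvw₀]
    simpa using hirr.1.dualIdem_mulVec_mem (i := 1) (by omega) hw₀
  have hsum : ∑ z, v z = 0 :=
    sum_eq_zero_of_dualIdem_zero_mulVec_distMat_one_mulVec hv1 ((Submodule.mem_bot ℂ).1
      (hend.1 ▸ Submodule.mem_map_of_mem (hirr.1.distMat_one_mulVec_mem hvW')))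
  have hAv : dualIdem G x 1 *ᵥ (distMat G 1 *ᵥ v) = -v := by
    simpa [← mulVec_mulVec, hv1] using hloc v ⟨w₀, hw₀, hvw₀⟩
  have hfirst : ∀ i, 1 ≤ i → i + 1 ≤ D →
      dualIdem G x i *ᵥ (distMat G (i + 1 : ℕ) *ᵥ v) = 0 := fun _ =>
    hirr.dualIdem_mulVec_distMat_succ_mulVec_eq_zero hthin hdrg hvW' hv hv1 hsum hAv
  refine ⟨fun i hi hiD => by exact_mod_cast hfirst i hi (by omega),
    ⟨_, dualIdem_mulVec_distMat_mulVec_eq_self hdrg.1 (hdrg.2.1 x) hv1 ?_⟩⟩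
  simpa [show D - 1 + 1 = D by omega] using hfirst (D - 1) (by omega) (by omega)
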